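/- arXiv:math/0408437 — 3 statements merged into one kernel-verified Lean document; each statement's English description precedes it below -/
import Mathlib

section
/- Let 𝒜 be a central arrangement in ℂⁿ with defining polynomial p = p₁⋯p_r and let m ≥ 1. For a family u = (u_α)_{|α|=m} of polynomials, u ∈ D^(m)(𝒜) if and only if there exists a family w = (w_β)_{|β|<m} of polynomials such that Σ_{|α|=m} u_α · ∂^α(x^β p) + p·w_β = 0 for every β ∈ ℕⁿ with |β| < m; moreover, for each u ∈ D^(m)(𝒜) such a family w is unique. Hence the projection (u,w) ↦ u from the syzygy module {(u,w) : Σ_α u_α ∂^α(x^β p) + p w_β = 0 for all |β| < m} to D^(m)(𝒜) is an isomorphism of S-modules. -/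
/-!
`c ↦ applyOp c` turns an order-`m` family into a differential operator `D` of order `≤ m` in
Grothendieck's sense: each commutator `⁅D, f⁆` with a multiplication operator has order
`≤ m - 1`. Writing `D (x_i g p) = x_i D (g p) + ⁅D, x_i⁆ (g p)`, induction on the order and on `g`
shows that `D` preserves `⟨p⟩` as soon as it maps the finitely many `x^β p` with `|β| < m` into
`⟨p⟩`; the `w_β` are then the quotients by `p`, unique since `p ≠ 0`.
-/

open MvPolynomial

noncomputable section

/-- The polynomial ring `S = ℂ[x₁,…,xₙ]`. -/
abbrev S (n : ℕ) : Type := MvPolynomial (Fin n) ℂ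

/-- The finite set of exponent vectors `α ∈ ℕⁿ` with `|α| = m`. -/
def degIdx (n m : ℕ) : Finset (Fin n → ℕ) :=
  (Fintype.piFinset fun _ : Fin n => Finset.range (m + 1)).filter fun α => ∑ i, α i = m

/-- The differential operator `∂^α`, the composition of the partial derivatives
`∂/∂xᵢ` applied `αᵢ` times. -/
def pd {n : ℕ} (α : Fin n → ℕ) : Module.End ℂ (S n) :=
  (List.ofFn fun i : Fin n => ((pderiv (R := ℂ) i).toLinearMap) ^ (α i)).prod

/-- The action of an order-`m` differential operator with polynomial coefficients
`c = (c_α)_{|α| = m}` on a polynomial: `c(f) = Σ_{|α|=m} c_α ∂^α f`. -/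
def applyOp {n m : ℕ} (c : degIdx n m → S n) (f : S n) : S n :=
  ∑ α : degIdx n m, c α * pd (α : Fin n → ℕ) f

lemma applyOp_add {n m : ℕ} (a b : degIdx n m → S n) (f : S n) :
    applyOp (a + b) f = applyOp a f + applyOp b f := by
  simp [applyOp, add_mul, Finset.sum_add_distrib]

lemma applyOp_smul {n m : ℕ} (s : S n) (a : degIdx n m → S n) (f : S n) :
    applyOp (s • a) f = s * applyOp a f := by
  simp [applyOp, Finset.mul_sum, mul_assoc]

lemma applyOp_zero {n m : ℕ} (f : S n) : applyOp (0 : degIdx n m → S n) f = 0 := by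
  simp [applyOp]

/-- `D^(m)(p)`: the `S`-module of order-`m` differential operators with polynomial
coefficients preserving the principal ideal `⟨p⟩`. -/
def Dm {n : ℕ} (m : ℕ) (p : S n) : Submodule (S n) (degIdx n m → S n) where
  carrier := {c | ∀ f ∈ Ideal.span {p}, applyOp c f ∈ Ideal.span {p}}
  add_mem' := by
    intro a b ha hb f hf
    rw [applyOp_add]
    exact Ideal.add_mem _ (ha f hf) (hb f hf)
  zero_mem' := by
    intro f hf
    rw [applyOp_zero]
    exact Ideal.zero_mem _
  smul_mem' := by
    intro s c hc f hf
    rw [applyOp_smul]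
    exact Ideal.mul_mem_left _ _ (hc f hf)

/-- A nonzero linear form. -/
def IsLinearForm {n : ℕ} (q : S n) : Prop := q ≠ 0 ∧ q.IsHomogeneous 1

/-- The linear forms of an arrangement are pairwise non-proportional. -/
def PairwiseNonProportional {n r : ℕ} (p : Fin r → S n) : Prop :=
  ∀ i j : Fin r, i ≠ j → ∀ a : ℂ, p i ≠ a • p j

end

noncomputable section

/-- The finite set of exponent vectors `β ∈ ℕⁿ` with `|β| < m`. -/
def degLtIdx (n m : ℕ) : Finset (Fin n → ℕ) :=
  (Fintype.piFinset fun _ : Fin n => Finset.range (m + 1)).filter fun β => ∑ i, β i < m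

/-- The syzygy module `{(u,w) : Σ_α u_α ∂^α(x^β p) + p·w_β = 0 for all |β| < m}`. -/
def SyzMod {n : ℕ} (m : ℕ) (p : S n) :
    Submodule (S n) ((degIdx n m → S n) × (degLtIdx n m → S n)) where
  carrier := {uw | ∀ β : degLtIdx n m,
    applyOp uw.1 ((∏ i, X i ^ (β : Fin n → ℕ) i) * p) + p * uw.2 β = 0}
  add_mem' := by
    intro a b ha hb β
    have ha' := ha β; have hb' := hb β
    simp only [Prod.fst_add, Prod.snd_add, applyOp_add, Pi.add_apply, mul_add] at *
    linear_combination ha' + hb'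
  zero_mem' := by
    intro β
    simp [applyOp_zero]
  smul_mem' := by
    intro s a ha β
    have ha' := ha β
    simp only [Prod.smul_fst, Prod.smul_snd, applyOp_smul, Pi.smul_apply, smul_eq_mul]
    linear_combination s * ha'

section DifferentialOperator

variable {R A : Type*} [CommRing R] [CommRing A] [Algebra R A]

/-- Grothendieck's differential operators of order `≤ k`. -/
def IsDiffOp : ℕ → Module.End R A → Prop
  | 0, D => ∀ f : A, ⁅D, LinearMap.mulLeft R f⁆ = 0
  | k + 1, D => ∀ f : A, IsDiffOp k ⁅D, LinearMap.mulLeft R f⁆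

variable {k : ℕ} {D E : Module.End R A}

theorem IsDiffOp.map_mul_left (hD : IsDiffOp 0 D) (f x : A) : D (f * x) = f * D x := by
  simpa [Ring.lie_def, sub_eq_zero] using LinearMap.congr_fun (hD f) x

theorem isDiffOp_zero (k : ℕ) : IsDiffOp k (0 : Module.End R A) := by
  have hcomm : ∀ f : A, ⁅(0 : Module.End R A), LinearMap.mulLeft R f⁆ = 0 := fun f => by
    rw [Ring.lie_def, zero_mul, mul_zero, sub_self]
  induction k with
  | zero => exact hcomm
  | succ k ih => exact fun f => by rw [hcomm]; exact ih

theorem isDiffOp_one : IsDiffOp 0 (1 : Module.End R A) :=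
  fun f => by rw [Ring.lie_def, one_mul, mul_one, sub_self]

theorem IsDiffOp.add (hD : IsDiffOp k D) (hE : IsDiffOp k E) : IsDiffOp k (D + E) := by
  have hcomm : ∀ (f : A) (D E : Module.End R A), ⁅D + E, LinearMap.mulLeft R f⁆ =
      ⁅D, LinearMap.mulLeft R f⁆ + ⁅E, LinearMap.mulLeft R f⁆ := fun f D E => by
    simp only [Ring.lie_def, add_mul, mul_add]
    abel
  induction k generalizing D E with
  | zero => exact fun f => by rw [hcomm, hD f, hE f, add_zero]
  | succ k ih => exact fun f => by rw [hcomm]; exact ih (hD f) (hE f)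

theorem isDiffOp_sum {ι : Type*} (s : Finset ι) {D : ι → Module.End R A}
    (hD : ∀ i ∈ s, IsDiffOp k (D i)) : IsDiffOp k (∑ i ∈ s, D i) :=
  Finset.sum_induction _ _ (fun _ _ => IsDiffOp.add) (isDiffOp_zero k) hD

theorem IsDiffOp.mulLeft_mul (c : A) (hD : IsDiffOp k D) :
    IsDiffOp k (LinearMap.mulLeft R c * D) := by
  have hcomm : ∀ (f : A) (D : Module.End R A),
      ⁅LinearMap.mulLeft R c * D, LinearMap.mulLeft R f⁆ =
        LinearMap.mulLeft R c * ⁅D, LinearMap.mulLeft R f⁆ := by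
    intro f D
    ext x
    simp only [Ring.lie_def, LinearMap.sub_apply, Module.End.mul_apply, LinearMap.mulLeft_apply]
    ring
  induction k generalizing D with
  | zero => exact fun f => by rw [hcomm, hD f, mul_zero]
  | succ k ih => exact fun f => by rw [hcomm]; exact ih (hD f)

theorem IsDiffOp.derivation_mul (d : Derivation R A A) (hD : IsDiffOp k D) :
    IsDiffOp (k + 1) (d.toLinearMap * D) := by
  have hcomm : ∀ (f : A) (D : Module.End R A),
      ⁅d.toLinearMap * D, LinearMap.mulLeft R f⁆ =
        d.toLinearMap * ⁅D, LinearMap.mulLeft R f⁆ + LinearMap.mulLeft R (d f) * D := by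
    intro f D
    ext x
    simp only [Ring.lie_def, LinearMap.add_apply, LinearMap.sub_apply, Module.End.mul_apply,
      LinearMap.mulLeft_apply, Derivation.coeFn_coe, map_sub, Derivation.leibniz,
      smul_eq_mul]
    ring
  induction k generalizing D with
  | zero => exact fun f => by rw [hcomm, hD f, mul_zero, zero_add]; exact mulLeft_mul _ hD
  | succ k ih => exact fun f => by rw [hcomm]; exact (ih (hD f)).add (mulLeft_mul _ hD)

theorem IsDiffOp.derivation_pow_mul (d : Derivation R A A) (a : ℕ) (hD : IsDiffOp k D) :
    IsDiffOp (a + k) (d.toLinearMap ^ a * D) := by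
  induction a with
  | zero => simpa using hD
  | succ a ih =>
    rw [pow_succ', mul_assoc, Nat.add_right_comm]
    exact derivation_mul d ih

theorem isDiffOp_ofFn_prod_derivation_pow {m : ℕ} (d : Fin m → Derivation R A A)
    (a : Fin m → ℕ) : IsDiffOp (∑ i, a i) (List.ofFn fun i => (d i).toLinearMap ^ a i).prod := by
  induction m with
  | zero => simpa using isDiffOp_one
  | succ m ih =>
    rw [List.ofFn_succ, List.prod_cons, Fin.sum_univ_succ]
    exact (ih _ _).derivation_pow_mul _ _

theorem IsDiffOp.map_mul_mem_span_singleton {σ : Type*} {D : Module.End R (MvPolynomial σ R)}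
    (hD : IsDiffOp k D) (p : MvPolynomial σ R)
    (h : ∀ s : σ →₀ ℕ, s.degree < k → D (monomial s 1 * p) ∈ Ideal.span {p})
    (g : MvPolynomial σ R) : D (g * p) ∈ Ideal.span {p} := by
  induction k generalizing D g with
  | zero =>
    rw [hD.map_mul_left, ← mul_one p, hD.map_mul_left, mul_one]
    exact Ideal.mul_mem_left _ _ (Ideal.mul_mem_right _ _ (Ideal.mem_span_singleton_self p))
  | succ k ih =>
    have hcomm : ∀ (i : σ) (g : MvPolynomial σ R),
        ⁅D, LinearMap.mulLeft R (X i)⁆ (g * p) ∈ Ideal.span {p} := by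
      intro i g
      refine ih (hD (X i)) (fun s hs => ?_) g
      have hXs : X i * (monomial s 1 * p) = monomial (Finsupp.single i 1 + s) 1 * p := by
        rw [monomial_single_add, pow_one, mul_assoc]
      simp only [Ring.lie_def, LinearMap.sub_apply, Module.End.mul_apply,
        LinearMap.mulLeft_apply, hXs]
      refine Ideal.sub_mem _ (h _ ?_) (Ideal.mul_mem_left _ _ (h s (by omega)))
      rw [map_add, Finsupp.degree_single]
      omega
    clear ih
    induction g using MvPolynomial.induction_on with
    | C a =>
      simpa [← smul_eq_C_mul] using Ideal.mul_mem_left _ (C a) (h 0 (by simp))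
    | add f g hf hg => rw [add_mul, map_add]; exact Ideal.add_mem _ hf hg
    | mul_X g i hg =>
      have hsplit : D (g * X i * p) =
          X i * D (g * p) + ⁅D, LinearMap.mulLeft R (X i)⁆ (g * p) := by
        simp only [Ring.lie_def, LinearMap.sub_apply, Module.End.mul_apply,
          LinearMap.mulLeft_apply]
        ring_nf
      rw [hsplit]
      exact Ideal.add_mem _ (Ideal.mul_mem_left _ _ hg) (hcomm i g)

end DifferentialOperator

theorem monomial_one_eq_prod_X_pow {σ R : Type*} [Fintype σ] [CommSemiring R] (s : σ →₀ ℕ) :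
    (monomial s 1 : MvPolynomial σ R) = ∏ i, X i ^ s i := by
  rw [monomial_eq, C_1, one_mul, Finsupp.prod_pow]

section Syzygy

variable {n m : ℕ}

theorem isDiffOp_pd (α : Fin n → ℕ) : IsDiffOp (∑ i, α i) (pd α) :=
  isDiffOp_ofFn_prod_derivation_pow _ _

theorem exists_isDiffOp_eq_applyOp (c : degIdx n m → S n) :
    ∃ D : Module.End ℂ (S n), IsDiffOp m D ∧ ⇑D = applyOp c := by
  refine ⟨∑ α : degIdx n m, LinearMap.mulLeft ℂ (c α) * pd α,
    isDiffOp_sum _ fun α _ => ?_, ?_⟩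
  · have hα : ∑ i, (α : Fin n → ℕ) i = m := (Finset.mem_filter.1 α.2).2
    have hD := (isDiffOp_pd (α : Fin n → ℕ)).mulLeft_mul (c α)
    rwa [hα] at hD
  · ext f
    simp [applyOp]

theorem mem_degLtIdx_of_degree_lt {s : Fin n →₀ ℕ} (hs : s.degree < m) : ⇑s ∈ degLtIdx n m := by
  refine Finset.mem_filter.2 ⟨Fintype.mem_piFinset.2 fun i => ?_, ?_⟩
  · exact Finset.mem_range.2 (Nat.lt_succ_of_lt ((s.le_degree i).trans_lt hs))
  · rwa [← Finsupp.degree_eq_sum]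

theorem mem_Dm_iff_exists_mem_syzMod (p : S n) (u : degIdx n m → S n) :
    u ∈ Dm m p ↔ ∃ w, (u, w) ∈ SyzMod m p := by
  constructor
  · intro hu
    have hdvd : ∀ β : degLtIdx n m, p ∣ applyOp u ((∏ i, X i ^ (β : Fin n → ℕ) i) * p) :=
      fun β => Ideal.mem_span_singleton.1
        (hu _ (Ideal.mul_mem_left _ _ (Ideal.mem_span_singleton_self p)))
    choose q hq using hdvd
    exact ⟨-q, fun β => show _ + p * -q β = 0 by rw [hq β, mul_neg, add_neg_cancel]⟩
  · rintro ⟨w, hw⟩ f hf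
    obtain ⟨g, rfl⟩ := Ideal.mem_span_singleton'.1 hf
    obtain ⟨D, hD, hDu⟩ := exists_isDiffOp_eq_applyOp u
    rw [← hDu]
    refine hD.map_mul_mem_span_singleton p (fun s hs => ?_) g
    have hβ : applyOp u ((∏ i, X i ^ s i) * p) + p * w ⟨s, mem_degLtIdx_of_degree_lt hs⟩ = 0 :=
      hw ⟨s, mem_degLtIdx_of_degree_lt hs⟩
    rw [hDu, monomial_one_eq_prod_X_pow, eq_neg_of_add_eq_zero_left hβ]
    exact (Ideal.neg_mem_iff _).2 (Ideal.mul_mem_right _ _ (Ideal.mem_span_singleton_self p))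

theorem mem_syzMod_unique {p : S n} (hp : p ≠ 0) {u : degIdx n m → S n}
    {w w' : degLtIdx n m → S n} (h : (u, w) ∈ SyzMod m p) (h' : (u, w') ∈ SyzMod m p) :
    w = w' :=
  funext fun β => mul_left_cancel₀ hp (by linear_combination h β - h' β)

def syzModEquivDm {p : S n} (hp : p ≠ 0) : SyzMod m p ≃ₗ[S n] Dm m p :=
  LinearEquiv.ofBijective
    (((LinearMap.fst (S n) _ _).comp (SyzMod m p).subtype).codRestrict (Dm m p)
      fun x => (mem_Dm_iff_exists_mem_syzMod p _).2 ⟨x.1.2, x.2⟩)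
    ⟨fun x y hxy => by
      have hfst : x.1.1 = y.1.1 := congrArg Subtype.val hxy
      have hy : (x.1.1, y.1.2) ∈ SyzMod m p := hfst ▸ y.2
      exact Subtype.ext (Prod.ext hfst (mem_syzMod_unique hp x.2 hy)),
    fun v => by
      obtain ⟨w, hw⟩ := (mem_Dm_iff_exists_mem_syzMod p v.1).1 v.2
      exact ⟨⟨(v.1, w), hw⟩, rfl⟩⟩

end Syzygy

theorem syzygy_description_general {n r m : ℕ} (p : Fin r → S n)
    (hlin : ∀ i, IsLinearForm (p i)) :
    (∀ u : degIdx n m → S n,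
      u ∈ Dm m (∏ i, p i) ↔
        ∃ w : degLtIdx n m → S n, ∀ β : degLtIdx n m,
          applyOp u ((∏ i, X i ^ (β : Fin n → ℕ) i) * ∏ j, p j) + (∏ j, p j) * w β = 0) ∧
    (∀ u : degIdx n m → S n, ∀ w w' : degLtIdx n m → S n,
      (∀ β : degLtIdx n m,
        applyOp u ((∏ i, X i ^ (β : Fin n → ℕ) i) * ∏ j, p j) + (∏ j, p j) * w β = 0) →
      (∀ β : degLtIdx n m,
        applyOp u ((∏ i, X i ^ (β : Fin n → ℕ) i) * ∏ j, p j) + (∏ j, p j) * w' β = 0) →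
      w = w') ∧
    ∃ e : SyzMod m (∏ i, p i) ≃ₗ[S n] Dm m (∏ i, p i),
      ∀ uw : SyzMod m (∏ i, p i), (e uw : degIdx n m → S n) = (uw : (degIdx n m → S n) × (degLtIdx n m → S n)).1 := by
  have hp : ∏ i, p i ≠ 0 := Finset.prod_ne_zero_iff.2 fun i _ => (hlin i).1
  exact ⟨fun u => mem_Dm_iff_exists_mem_syzMod _ u, fun _ _ _ => mem_syzMod_unique hp,
    syzModEquivDm hp, fun _ => rfl⟩

/-- `u ∈ D^(m)(𝒜)` iff there is a family `w = (w_β)_{|β|<m}` with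
`Σ_{|α|=m} u_α ∂^α(x^β p) + p·w_β = 0` for all `|β| < m`; for `u ∈ D^(m)(𝒜)` such a
`w` is unique, and the projection `(u,w) ↦ u` is an `S`-module isomorphism from the
syzygy module onto `D^(m)(𝒜)`. -/
theorem syzygy_description {n r m : ℕ} (hm : 1 ≤ m) (hr : 1 ≤ r) (p : Fin r → S n)
    (hlin : ∀ i, IsLinearForm (p i)) (hnp : PairwiseNonProportional p) :
    (∀ u : degIdx n m → S n,
      u ∈ Dm m (∏ i, p i) ↔
        ∃ w : degLtIdx n m → S n, ∀ β : degLtIdx n m,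
          applyOp u ((∏ i, X i ^ (β : Fin n → ℕ) i) * ∏ j, p j) + (∏ j, p j) * w β = 0) ∧
    (∀ u : degIdx n m → S n, ∀ w w' : degLtIdx n m → S n,
      (∀ β : degLtIdx n m,
        applyOp u ((∏ i, X i ^ (β : Fin n → ℕ) i) * ∏ j, p j) + (∏ j, p j) * w β = 0) →
      (∀ β : degLtIdx n m,
        applyOp u ((∏ i, X i ^ (β : Fin n → ℕ) i) * ∏ j, p j) + (∏ j, p j) * w' β = 0) →
      w = w') ∧
    ∃ e : SyzMod m (∏ i, p i) ≃ₗ[S n] Dm m (∏ i, p i),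
      ∀ uw : SyzMod m (∏ i, p i), (e uw : degIdx n m → S n) = (uw : (degIdx n m → S n) × (degLtIdx n m → S n)).1 :=
  syzygy_description_general p hlin

end
end

section
/- For every m ≥ 1 and every central arrangement 𝒜 in ℂⁿ with defining polynomial p = p₁⋯p_r, the modified Euler operator ε_m belongs to D^(m)(𝒜); that is, ε_m(f) ∈ ⟨p⟩ for every f ∈ ⟨p⟩. -/
open MvPolynomial

/-- The modified Euler operator `ε_m`, with coefficient family
`(ε_m)_α = (m!/α!)·x^α` where `m!/α!` is the multinomial coefficient. -/
noncomputable def eulerOp (n m : ℕ) : degIdx n m → S n :=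
  fun α => (Nat.multinomial Finset.univ (α : Fin n → ℕ) : S n) *
    ∏ i, X i ^ ((α : Fin n → ℕ) i)

/-!
On a monomial `x^s`, the operator `x^α ∂^α` acts by the scalar `∏ᵢ (sᵢ)_{αᵢ}` (falling
factorials). Weighting by `m!/α!` and summing over `|α| = m`, the multivariate Chu–Vandermonde
identity collapses this to `(|s|)_m`, so `ε_m` multiplies every homogeneous polynomial of degree
`d` by `d(d-1)⋯(d-m+1)`. As `p` is homogeneous of degree `r`, each `x^s p` is homogeneous, hence
`ε_m(g p) = Σ_s g_s (|s| + r)_m x^s p ∈ ⟨p⟩`.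
-/

open Finset

theorem Finset.sum_piAntidiag_prod_choose {ι : Type*} [DecidableEq ι]
    (s : Finset ι) (β : ι → ℕ) (m : ℕ) :
    ∑ α ∈ s.piAntidiag m, ∏ i ∈ s, (β i).choose (α i) =
      (∑ i ∈ s, β i).choose m := by
  induction s using Finset.cons_induction generalizing m with
  | empty => cases m <;> simp
  | cons a s ha ih =>
    rw [piAntidiag_cons, sum_disjiUnion, sum_cons, Nat.add_choose_eq]
    refine sum_congr rfl fun kl _ => ?_
    rw [sum_map, ← ih, mul_sum]
    refine sum_congr rfl fun α hα => ?_
    have hαa : α a = 0 := by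
      by_contra h
      exact ha ((mem_piAntidiag.mp hα).2 a h)
    rw [prod_cons]
    simp only [addRightEmbedding_apply, Pi.add_apply, if_pos, hαa, zero_add]
    congr 1
    refine prod_congr rfl fun i hi => ?_
    rw [if_neg (ne_of_mem_of_not_mem hi ha), add_zero]

theorem Finset.sum_piAntidiag_multinomial_mul_prod_descFactorial {ι : Type*} [DecidableEq ι]
    (s : Finset ι) (β : ι → ℕ) (m : ℕ) :
    ∑ α ∈ s.piAntidiag m, Nat.multinomial s α * ∏ i ∈ s, (β i).descFactorial (α i) =
      (∑ i ∈ s, β i).descFactorial m := by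
  rw [Nat.descFactorial_eq_factorial_mul_choose, ← sum_piAntidiag_prod_choose, mul_sum]
  refine sum_congr rfl fun α hα => ?_
  simp_rw [Nat.descFactorial_eq_factorial_mul_choose, prod_mul_distrib, ← mul_assoc,
    mul_comm (Nat.multinomial s α), Nat.multinomial_spec, (mem_piAntidiag.mp hα).1]

namespace MvPolynomial

variable {σ R : Type*} [CommSemiring R]

theorem pderiv_pow_apply_monomial (i : σ) (k : ℕ) (s : σ →₀ ℕ) (c : R) :
    ((pderiv i).toLinearMap ^ k) (monomial s c) =
      monomial (s - Finsupp.single i k) ((s i).descFactorial k * c) := by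
  induction k with
  | zero => simp
  | succ k ih =>
    classical
    rw [pow_succ', Module.End.mul_apply, ih, Derivation.coeFn_coe, pderiv_monomial, tsub_tsub,
      ← Finsupp.single_add, Finsupp.tsub_apply, Finsupp.single_eq_same, Nat.descFactorial_succ]
    push_cast
    ring_nf

theorem list_prod_pderiv_pow_apply_monomial {L : List σ} (hL : L.Nodup) (α : σ → ℕ)
    (s : σ →₀ ℕ) (c : R) :
    (L.map fun i => (pderiv i).toLinearMap ^ α i).prod (monomial s c) =
      monomial (s - (L.map fun i => Finsupp.single i (α i)).sum)
        ((L.map fun i => (s i).descFactorial (α i)).prod * c) := by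
  induction L with
  | nil => simp
  | cons i L ih =>
    obtain ⟨hi, hL⟩ := List.nodup_cons.mp hL
    have hsi : (s - (L.map fun j => Finsupp.single j (α j)).sum) i = s i := by
      rw [Finsupp.tsub_apply, ← Finsupp.applyAddHom_apply (M := ℕ) i (List.sum _),
        map_list_sum, List.map_map, List.sum_eq_zero, Nat.sub_zero]
      simp only [List.mem_map, Function.comp_apply, Finsupp.applyAddHom_apply]
      rintro _ ⟨j, hj, rfl⟩
      exact Finsupp.single_eq_of_ne fun h => hi (h ▸ hj)
    simp only [List.map_cons, List.prod_cons, List.sum_cons, Module.End.mul_apply, ih hL,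
      pderiv_pow_apply_monomial, hsi, tsub_tsub, add_comm (List.sum _), Nat.cast_mul, mul_assoc]

end MvPolynomial

theorem applyOp_sum {n m : ℕ} (c : degIdx n m → S n) {ι : Type*} (t : Finset ι)
    (f : ι → S n) :
    applyOp c (∑ x ∈ t, f x) = ∑ x ∈ t, applyOp c (f x) := by
  simp only [applyOp, map_sum, mul_sum]
  exact sum_comm

theorem degIdx_eq_piAntidiag (n m : ℕ) : degIdx n m = univ.piAntidiag m := by
  ext α
  simp only [degIdx, mem_filter, Fintype.mem_piFinset, mem_range, mem_piAntidiag, mem_univ,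
    implies_true, and_true, and_iff_right_iff_imp]
  intro hα i
  have := single_le_sum (fun j _ => Nat.zero_le (α j)) (mem_univ i)
  omega

theorem pd_monomial {n : ℕ} (α : Fin n → ℕ) (s : Fin n →₀ ℕ) (c : ℂ) :
    pd α (monomial s c) = monomial (s - Finsupp.equivFunOnFinite.symm α)
      ((∏ i, (s i).descFactorial (α i) : ℕ) * c) := by
  rw [pd, List.ofFn_eq_map, list_prod_pderiv_pow_apply_monomial (List.nodup_finRange n),
    ← Fin.sum_univ_def, ← Fin.prod_univ_def, Finsupp.equivFunOnFinite_symm_eq_sum]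

theorem prod_X_pow_mul_pd_monomial {n : ℕ} (α : Fin n → ℕ) (s : Fin n →₀ ℕ) (c : ℂ) :
    (∏ i, X i ^ α i) * pd α (monomial s c) =
      monomial s ((∏ i, (s i).descFactorial (α i) : ℕ) * c) := by
  have hX : (∏ i, X i ^ α i : S n) = monomial (Finsupp.equivFunOnFinite.symm α) 1 := by
    rw [prod_X_pow]
    congr
    ext i
    simp
  rw [hX, pd_monomial]
  by_cases hle : Finsupp.equivFunOnFinite.symm α ≤ s
  · rw [monomial_mul, add_tsub_cancel_of_le hle, one_mul]
  · obtain ⟨i, hi⟩ : ∃ i, s i < α i := by simpa [Finsupp.le_def] using hle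
    rw [prod_eq_zero (mem_univ i) (Nat.descFactorial_eq_zero_iff_lt.mpr hi)]
    simp

theorem applyOp_eulerOp_monomial {n : ℕ} (m : ℕ) (s : Fin n →₀ ℕ) (c : ℂ) :
    applyOp (eulerOp n m) (monomial s c) = monomial s ((s.degree.descFactorial m : ℕ) * c) := by
  simp_rw [applyOp, eulerOp, mul_assoc, prod_X_pow_mul_pd_monomial, ← C_eq_coe_nat,
    C_mul_monomial, ← mul_assoc, ← Nat.cast_mul, ← map_sum, ← sum_mul, ← Nat.cast_sum]
  rw [sum_coe_sort (degIdx n m) fun α =>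
      Nat.multinomial univ α * ∏ i, (s i).descFactorial (α i),
    degIdx_eq_piAntidiag, sum_piAntidiag_multinomial_mul_prod_descFactorial,
    Finsupp.degree_eq_sum]

theorem applyOp_eulerOp_of_isHomogeneous {n m d : ℕ} {h : S n} (hh : h.IsHomogeneous d) :
    applyOp (eulerOp n m) h = (d.descFactorial m : S n) * h := by
  conv_lhs => rw [h.as_sum]
  conv_rhs => rw [h.as_sum]
  rw [applyOp_sum, mul_sum]
  refine sum_congr rfl fun s hs => ?_
  have hs : s.degree = d := by
    rw [Finsupp.degree_eq_weight_one]
    exact hh (mem_support_iff.mp hs)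
  rw [applyOp_eulerOp_monomial, ← C_eq_coe_nat, C_mul_monomial, hs]

theorem eulerOp_mem_Dm_of_isHomogeneous {n r : ℕ} (m : ℕ) {p : S n}
    (hp : p.IsHomogeneous r) : eulerOp n m ∈ Dm m p := by
  intro f hf
  obtain ⟨g, rfl⟩ := Ideal.mem_span_singleton'.mp hf
  rw [g.as_sum, sum_mul, applyOp_sum]
  refine Ideal.sum_mem _ fun s _ => ?_
  rw [applyOp_eulerOp_of_isHomogeneous ((isHomogeneous_monomial _ rfl).mul hp)]
  exact Ideal.mul_mem_left _ _ (Ideal.mul_mem_left _ _ (Ideal.mem_span_singleton_self p))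

theorem eulerOp_mem_Dm_general {n r m : ℕ} (p : Fin r → S n)
    (hlin : ∀ i, IsLinearForm (p i)) :
    eulerOp n m ∈ Dm m (∏ i, p i) :=
  eulerOp_mem_Dm_of_isHomogeneous m <| by
    simpa using IsHomogeneous.prod univ p (fun _ => 1) fun i _ => (hlin i).2

/-- For every `m ≥ 1` and every central arrangement with defining
polynomial `p = p₁⋯p_r`, the modified Euler operator `ε_m` belongs to `D^(m)(𝒜)`;
i.e. `ε_m(f) ∈ ⟨p⟩` for every `f ∈ ⟨p⟩`. -/
theorem eulerOp_mem_Dm {n r m : ℕ} (hm : 1 ≤ m) (p : Fin r → S n)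
    (hlin : ∀ i, IsLinearForm (p i)) (hnp : PairwiseNonProportional p) :
    eulerOp n m ∈ Dm m (∏ i, p i) :=
  eulerOp_mem_Dm_general p hlin
end

section
/- Let 1 ≤ r ≤ n and m ≥ 1, and consider the arrangement with defining polynomial p = x₁⋯x_r in S = ℂ[x₁,…,xₙ]. For α ∈ ℕⁿ let x_α = Π_{i ≤ r, αᵢ > 0} xᵢ (the monic generator of the radical of ⟨x₁^{α₁}⋯x_r^{α_r}⟩). Then the family {x_α · ∂^α : α ∈ ℕⁿ, |α| = m} is a basis of the S-module D^(m)(x₁⋯x_r); in particular D^(m)(x₁⋯x_r) is a free S-module. -/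
open MvPolynomial

noncomputable section
open scoped Classical

/-- `x_α = Π_{i ≤ r, αᵢ > 0} xᵢ`, the monic generator of the radical of
`⟨x₁^{α₁}⋯x_r^{α_r}⟩`. -/
def xRad {n : ℕ} (r : ℕ) (α : Fin n → ℕ) : S n :=
  ∏ i ∈ Finset.univ.filter (fun i : Fin n => (i : ℕ) < r ∧ 0 < α i), X i

/-- The operator `x_α ∂^α`: the coefficient family whose only nonzero coefficient
is `x_α`, in position `α`. -/
def xRadOp {n : ℕ} (r m : ℕ) (α : degIdx n m) : degIdx n m → S n :=
  Pi.single α (xRad r (α : Fin n → ℕ))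


/-!
Write `p = x₁⋯x_r`. The operator `x_α ∂^α` preserves `⟨p⟩`: `∂^α` is linear over the factors
`xᵢ` of `p` with `αᵢ = 0`, and `x_α` supplies the others. Conversely let `c ∈ D^(m)(p)`, `i < r`
and `αᵢ > 0`. At a point `a` with `aᵢ = 0`, apply `c` to `f = (x - a)^α · p / xᵢ ∈ ⟨p⟩`: every
`∂^β f` with `|β| = |α|`, `β ≠ α` vanishes at `a`, since some `(xⱼ - aⱼ)` is differentiated
fewer than `αⱼ` times, so `c(f)(a) = α! c_α(a) (p / xᵢ)(a)`, and it is `0` because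
`c(f) ∈ ⟨p⟩ ⊆ ⟨xᵢ⟩`. Thus `xᵢ ∣ c_α · p / xᵢ`, hence `xᵢ ∣ c_α`, and so `x_α ∣ c_α`.
Therefore `(d_α) ↦ (x_α d_α)` is an isomorphism `S^{|α| = m} ≅ D^(m)(p)` carrying the standard
basis to `(x_α ∂^α)`.
-/

theorem Finset.prod_eq_mul_prod_update_zero {ι M : Type*} [Fintype ι] [DecidableEq ι]
    [CommMonoid M] (g : ι → ℕ → M) (hg : ∀ i, g i 0 = 1) (α : ι → ℕ) (j : ι) :
    ∏ i, g i (α i) = g j (α j) * ∏ i, g i (Function.update α j 0 i) := by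
  rw [← Finset.mul_prod_erase _ _ (Finset.mem_univ j),
    ← Finset.mul_prod_erase _ (fun i => g i (Function.update α j 0 i)) (Finset.mem_univ j),
    Function.update_self, hg, one_mul]
  exact congrArg _ <| Finset.prod_congr rfl fun i hi => by
    rw [Function.update_of_ne (Finset.ne_of_mem_erase hi)]

theorem exists_lt_of_sum_eq_of_ne {ι : Type*} [Fintype ι] {α β : ι → ℕ}
    (hsum : ∑ i, β i = ∑ i, α i) (hne : β ≠ α) : ∃ i, β i < α i := by
  by_contra! h
  exact hne (funext fun i =>
    ((Finset.sum_eq_sum_iff_of_le fun i _ => h i).mp hsum.symm i (Finset.mem_univ i)).symm)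

theorem Submodule.exists_basis_single_of_forall_dvd {R ι : Type*} [CommRing R] [IsDomain R]
    [Fintype ι] [DecidableEq ι] {N : Submodule R (ι → R)} {w : ι → R} (hw : ∀ i, w i ≠ 0)
    (hmem : ∀ i, Pi.single i (w i) ∈ N) (hdvd : ∀ c ∈ N, ∀ i, w i ∣ c i) :
    ∃ B : Module.Basis ι R N, ∀ i, (B i : ι → R) = Pi.single i (w i) := by
  let f := LinearMap.mulLeft R w
  have hinj : Function.Injective f := fun d d' h =>
    funext fun i => mul_left_cancel₀ (hw i) (congr_fun h i)
  have hrange : LinearMap.range f = N := by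
    refine le_antisymm ?_ fun c hc => ?_
    · rintro _ ⟨d, rfl⟩
      rw [← Finset.univ_sum_single (f d)]
      refine N.sum_mem fun i _ => ?_
      rw [LinearMap.mulLeft_apply, Pi.mul_apply, mul_comm, ← smul_eq_mul, Pi.single_smul']
      exact N.smul_mem (d i) (hmem i)
    · choose d hd using hdvd c hc
      exact ⟨d, funext fun i => (hd i).symm⟩
  refine ⟨(Pi.basisFun R ι).map ((LinearEquiv.ofInjective f hinj).trans (.ofEq _ _ hrange)),
    fun i => ?_⟩
  simp [f, ← Pi.single_mul_right]

namespace MvPolynomial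

variable {σ R : Type*} [CommRing R]

theorem commute_pderiv (i j : σ) :
    Commute (pderiv i : Derivation R (MvPolynomial σ R) (MvPolynomial σ R)).toLinearMap
      (pderiv j).toLinearMap := by
  have h : ⁅pderiv (R := R) (σ := σ) i, pderiv (R := R) j⁆ = 0 := by
    refine derivation_ext fun k => ?_
    rw [Derivation.commutator_apply, pderiv_X, pderiv_X, Pi.single_apply, Pi.single_apply]
    split_ifs <;> simp
  refine LinearMap.ext fun f => ?_
  simpa [Derivation.commutator_apply, sub_eq_zero] using congr($h f)

theorem pderiv_X_sub_C_pow_of_ne {i j : σ} (h : i ≠ j) (c : R) (e : ℕ) :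
    pderiv i ((X j - C c) ^ e) = 0 := by
  simp [pderiv_X_of_ne h.symm]

theorem pderiv_prod_X_of_notMem {s : Finset σ} {j : σ} (hj : j ∉ s) :
    pderiv j (∏ i ∈ s, X i : MvPolynomial σ R) = 0 :=
  Finset.prod_induction _ (fun q => pderiv j q = 0)
    (fun a b ha hb => by simp [ha, hb]) pderiv_one
    (fun i hi => pderiv_X_of_ne (ne_of_mem_of_not_mem hi hj))

theorem exists_pderiv_iterate_X_sub_C_pow_mul (j : σ) (c : R) (e k : ℕ)
    (w : MvPolynomial σ R) :
    ∃ v, (pderiv j)^[k] ((X j - C c) ^ (e + k) * w) =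
      (X j - C c) ^ e * (((e + k).descFactorial k : MvPolynomial σ R) * w + (X j - C c) * v) := by
  induction k generalizing w with
  | zero => exact ⟨0, by simp⟩
  | succ k ih =>
    have hstep : pderiv j ((X j - C c) ^ (e + (k + 1)) * w) =
        (X j - C c) ^ (e + k) * (((e + k + 1 : ℕ) : MvPolynomial σ R) * w +
          (X j - C c) * pderiv j w) := by
      rw [← add_assoc, pderiv_mul, pderiv_pow, Nat.add_sub_cancel, map_sub, pderiv_X_self,
        pderiv_C, sub_zero, pow_succ]
      push_cast
      ring
    obtain ⟨v, hv⟩ := ih (((e + k + 1 : ℕ) : MvPolynomial σ R) * w + (X j - C c) * pderiv j w)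
    refine ⟨(e + k).descFactorial k * pderiv j w + v, ?_⟩
    rw [Function.iterate_succ_apply, hstep, hv, ← add_assoc, Nat.succ_descFactorial_succ]
    push_cast
    ring

def shiftedMonomial [Fintype σ] (a : σ → R) (α : σ → ℕ) : MvPolynomial σ R :=
  ∏ j, (X j - C (a j)) ^ α j

theorem shiftedMonomial_eq_mul_update [Fintype σ] [DecidableEq σ] (a : σ → R) (α : σ → ℕ)
    (j : σ) :
    shiftedMonomial a α = (X j - C (a j)) ^ α j * shiftedMonomial a (Function.update α j 0) :=
  Finset.prod_eq_mul_prod_update_zero (fun i k => (X i - C (a i)) ^ k) (fun _ => pow_zero _) α j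

theorem X_dvd_sub_aeval_update_X_zero [DecidableEq σ] (i : σ) (q : MvPolynomial σ R) :
    X i ∣ q - aeval (Function.update X i 0) q := by
  have hmk : (Ideal.Quotient.mkₐ R (Ideal.span {X i})).comp (aeval (Function.update X i 0)) =
      Ideal.Quotient.mkₐ R _ :=
    algHom_ext fun j => by
      rcases eq_or_ne j i with rfl | hj
      · simp
      · simp [hj]
  rw [← Ideal.mem_span_singleton, ← Ideal.Quotient.eq]
  exact (AlgHom.congr_fun hmk q).symm

theorem X_dvd_of_eval_eq_zero [IsDomain R] [Infinite R] {i : σ} {q : MvPolynomial σ R}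
    (h : ∀ a : σ → R, a i = 0 → eval a q = 0) : X i ∣ q := by
  have hsubst : aeval (Function.update (X (R := R)) i 0) q = 0 := MvPolynomial.funext fun a => by
    have hpt : (fun j => aeval a (Function.update (X (R := R)) i 0 j)) = Function.update a i 0 := by
      funext j
      rcases eq_or_ne j i with rfl | hj <;> simp_all
    change aeval a (aeval _ q) = eval a 0
    rw [map_zero, comp_aeval_apply, hpt]
    exact h _ (by simp)
  simpa only [hsubst, sub_zero] using X_dvd_sub_aeval_update_X_zero i q

theorem prod_X_dvd_of_forall_X_dvd [IsDomain R] (s : Finset σ) {q : MvPolynomial σ R}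
    (h : ∀ i ∈ s, X i ∣ q) : ∏ i ∈ s, X i ∣ q := by
  induction s using Finset.induction_on generalizing q with
  | empty => simp
  | insert j s hj ih =>
    obtain ⟨w, rfl⟩ := h j (Finset.mem_insert_self j s)
    rw [Finset.prod_insert hj]
    refine mul_dvd_mul_left _ (ih fun i hi => ?_)
    refine (X_prime.dvd_or_dvd (h i (Finset.mem_insert_of_mem hi))).resolve_left fun hX => ?_
    exact hj (X_dvd_X.mp hX ▸ hi)

end MvPolynomial

theorem pd_eq_noncommProd {n : ℕ} (α : Fin n → ℕ) :
    pd α = Finset.univ.noncommProd (fun i => (pderiv (R := ℂ) i).toLinearMap ^ α i)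
      (by intro i _ j _ _; exact (commute_pderiv i j).pow_pow _ _) := by
  simp only [pd, Finset.noncommProd, Fin.univ_val_map, Multiset.noncommProd_coe]

theorem pd_eq_pow_mul_pd_update {n : ℕ} (α : Fin n → ℕ) (j : Fin n) :
    pd α = (pderiv (R := ℂ) j).toLinearMap ^ α j * pd (Function.update α j 0) := by
  rw [pd_eq_noncommProd, pd_eq_noncommProd]
  refine (Finset.mul_noncommProd_erase _ (Finset.mem_univ j) _ _).symm.trans ?_
  refine Eq.trans ?_ (congrArg _ (Finset.mul_noncommProd_erase _ (Finset.mem_univ j) _ _))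
  rw [Function.update_self, pow_zero, one_mul]
  exact congrArg _ <| Finset.noncommProd_congr rfl
    (fun i hi => by rw [Function.update_of_ne (Finset.ne_of_mem_erase hi)]) _

theorem pd_zero {n : ℕ} : pd (0 : Fin n → ℕ) = 1 := by
  simp [pd]

theorem pd_mul_of_pderiv_eq_zero {n : ℕ} (α : Fin n → ℕ) {h : S n}
    (hh : ∀ j, α j ≠ 0 → pderiv j h = 0) (f : S n) : pd α (h * f) = h * pd α f := by
  have hcomm : Commute (LinearMap.mulLeft ℂ h) (pd α) := by
    refine Commute.list_prod_right _ _ fun T hT => ?_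
    obtain ⟨j, rfl⟩ := List.mem_ofFn.mp hT
    by_cases hj : α j = 0
    · rw [hj, pow_zero]
      exact Commute.one_right _
    · refine Commute.pow_right (LinearMap.ext fun g => ?_) _
      simp [hh j hj]
  exact (LinearMap.congr_fun hcomm f).symm

theorem pd_shiftedMonomial_mul {n : ℕ} (a : Fin n → ℂ) (α β : Fin n → ℕ) (j : Fin n) (u : S n) :
    pd β (shiftedMonomial a α * u) = (pderiv j)^[β j] ((X j - C (a j)) ^ α j *
      pd (Function.update β j 0) (shiftedMonomial a (Function.update α j 0) * u)) := by
  have hconst : ∀ k, Function.update β j 0 k ≠ 0 → pderiv k ((X j - C (a j)) ^ α j) = 0 :=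
    fun k hk => pderiv_X_sub_C_pow_of_ne (by rintro rfl; simp at hk) _ _
  rw [pd_eq_pow_mul_pd_update β j, Module.End.mul_apply, shiftedMonomial_eq_mul_update a α j,
    mul_assoc, pd_mul_of_pderiv_eq_zero _ hconst, Module.End.pow_apply, Derivation.coeFn_coe]

theorem eval_pd_shiftedMonomial_mul_of_lt {n : ℕ} (a : Fin n → ℂ) {α β : Fin n → ℕ} {j : Fin n}
    (hj : β j < α j) (u : S n) : eval a (pd β (shiftedMonomial a α * u)) = 0 := by
  obtain ⟨e, he⟩ : ∃ e, α j = e + 1 + β j := ⟨α j - β j - 1, by omega⟩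
  obtain ⟨v, hv⟩ := exists_pderiv_iterate_X_sub_C_pow_mul j (a j) (e + 1) (β j)
    (pd (Function.update β j 0) (shiftedMonomial a (Function.update α j 0) * u))
  rw [pd_shiftedMonomial_mul a α β j, he, hv]
  simp

theorem eval_pd_shiftedMonomial_mul {n : ℕ} (a : Fin n → ℂ) (α : Fin n → ℕ) (u : S n) :
    eval a (pd α (shiftedMonomial a α * u)) = (∏ j, ((α j).factorial : ℂ)) * eval a u := by
  suffices ∀ s : Finset (Fin n), ∀ α : Fin n → ℕ, (∀ j ∉ s, α j = 0) → ∀ u : S n,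
      eval a (pd α (shiftedMonomial a α * u)) = (∏ j, ((α j).factorial : ℂ)) * eval a u from
    this Finset.univ α (by simp) u
  intro s
  induction s using Finset.induction_on with
  | empty =>
    intro α hα u
    obtain rfl : α = 0 := funext fun j => hα j (Finset.notMem_empty j)
    simp [pd_zero, shiftedMonomial]
  | insert j s _ ih =>
    intro α hα u
    have hα' : ∀ k ∉ s, Function.update α j 0 k = 0 := by
      intro k hk
      rcases eq_or_ne k j with rfl | hkj
      · simp
      · rw [Function.update_of_ne hkj]
        exact hα k (by simp [hk, hkj])
    obtain ⟨v, hv⟩ := exists_pderiv_iterate_X_sub_C_pow_mul j (a j) 0 (α j)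
      (pd (Function.update α j 0) (shiftedMonomial a (Function.update α j 0) * u))
    rw [zero_add] at hv
    rw [pd_shiftedMonomial_mul a α α j, hv,
      Finset.prod_eq_mul_prod_update_zero (fun _ k => (k.factorial : ℂ)) (by simp) α j]
    simp [ih _ hα', Nat.descFactorial_self]
    ring

theorem sum_degIdx {n m : ℕ} (α : degIdx n m) : ∑ i, (α : Fin n → ℕ) i = m :=
  (Finset.mem_filter.mp α.2).2

theorem applyOp_single {n m : ℕ} (α : degIdx n m) (w f : S n) :
    applyOp (Pi.single α w) f = w * pd α f := by
  rw [applyOp, Finset.sum_eq_single α] <;> simp_all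

theorem eval_applyOp_shiftedMonomial_mul {n m : ℕ} (c : degIdx n m → S n) (α : degIdx n m)
    (a : Fin n → ℂ) (u : S n) :
    eval a (applyOp c (shiftedMonomial a α * u)) =
      eval a (c α) * ((∏ j, (((α : Fin n → ℕ) j).factorial : ℂ)) * eval a u) := by
  rw [applyOp, map_sum, Finset.sum_eq_single α]
  · rw [map_mul, eval_pd_shiftedMonomial_mul]
  · intro β _ hβ
    obtain ⟨j, hj⟩ := exists_lt_of_sum_eq_of_ne (by rw [sum_degIdx, sum_degIdx])
      (Subtype.coe_injective.ne hβ)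
    rw [map_mul, eval_pd_shiftedMonomial_mul_of_lt a hj, mul_zero]
  · simp

theorem X_dvd_coeff_of_mem_Dm {n m : ℕ} {p u : S n} {i : Fin n} (hp : p = X i * u)
    (hu : ¬ X i ∣ u) {c : degIdx n m → S n} (hc : c ∈ Dm m p) {α : degIdx n m}
    (hαi : 0 < (α : Fin n → ℕ) i) : X i ∣ c α := by
  have hvanish : ∀ a : Fin n → ℂ, a i = 0 → eval a (c α * u) = 0 := by
    intro a hai
    have hf : shiftedMonomial a α * u ∈ Ideal.span {p} := by
      rw [Ideal.mem_span_singleton, hp, shiftedMonomial_eq_mul_update a α i, hai, map_zero,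
        sub_zero, mul_assoc]
      exact mul_dvd_mul (dvd_pow_self _ hαi.ne') (dvd_mul_left _ _)
    obtain ⟨g, hg⟩ := Ideal.mem_span_singleton'.mp (hc _ hf)
    have heval := eval_applyOp_shiftedMonomial_mul c α a u
    rw [← hg, hp, map_mul, map_mul, eval_X, hai, zero_mul, mul_zero, mul_left_comm,
      eq_comm, mul_eq_zero] at heval
    rw [map_mul]
    exact heval.resolve_left (Finset.prod_ne_zero_iff.mpr fun j _ =>
      Nat.cast_ne_zero.mpr (Nat.factorial_ne_zero _))
  exact (X_prime.dvd_or_dvd (X_dvd_of_eval_eq_zero hvanish)).resolve_right hu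

theorem xRad_dvd_coeff_of_mem_Dm {n r m : ℕ} {c : degIdx n m → S n}
    (hc : c ∈ Dm m (∏ i ∈ Finset.univ.filter (fun i : Fin n => (i : ℕ) < r), X i))
    (α : degIdx n m) : xRad r (α : Fin n → ℕ) ∣ c α := by
  refine prod_X_dvd_of_forall_X_dvd _ fun i hi => ?_
  obtain ⟨hir, hαi⟩ := (Finset.mem_filter.mp hi).2
  have hi' : i ∈ Finset.univ.filter (fun i : Fin n => (i : ℕ) < r) := by simpa using hir
  refine X_dvd_coeff_of_mem_Dm (Finset.mul_prod_erase _ _ hi').symm ?_ hc hαi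
  rw [X_prime.dvd_finsetProd_iff]
  rintro ⟨j, hj, hX⟩
  exact Finset.ne_of_mem_erase hj (X_dvd_X.mp hX).symm

theorem xRad_ne_zero {n : ℕ} (r : ℕ) (α : Fin n → ℕ) : xRad r α ≠ 0 :=
  Finset.prod_ne_zero_iff.mpr fun i _ => X_ne_zero i

theorem xRadOp_mem_Dm {n r m : ℕ} (α : degIdx n m) :
    xRadOp r m α ∈ Dm m (∏ i ∈ Finset.univ.filter (fun i : Fin n => (i : ℕ) < r), X i) := by
  intro f hf
  obtain ⟨g, rfl⟩ := Ideal.mem_span_singleton.mp hf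
  set q : S n :=
    ∏ i ∈ Finset.univ.filter (fun i : Fin n => (i : ℕ) < r ∧ ¬ 0 < (α : Fin n → ℕ) i), X i
  have hsplit : (∏ i ∈ Finset.univ.filter (fun i : Fin n => (i : ℕ) < r), X i) =
      xRad r (α : Fin n → ℕ) * q := by
    rw [xRad, ← Finset.prod_filter_mul_prod_filter_not _ (fun i => 0 < (α : Fin n → ℕ) i),
      Finset.filter_filter, Finset.filter_filter]
  have hq : ∀ j, (α : Fin n → ℕ) j ≠ 0 → pderiv j q = 0 := fun j hj =>
    pderiv_prod_X_of_notMem (by simp [hj])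
  rw [xRadOp, applyOp_single, hsplit, mul_assoc, mul_left_comm _ q,
    pd_mul_of_pderiv_eq_zero _ hq, Ideal.mem_span_singleton, ← mul_assoc]
  exact dvd_mul_right _ _

theorem Dm_coordinate_free_general {n r m : ℕ} :
    (∀ α : degIdx n m,
        xRadOp r m α ∈ Dm m (∏ i ∈ Finset.univ.filter (fun i : Fin n => (i : ℕ) < r), X i)) ∧
    (∃ B : Module.Basis (degIdx n m) (S n)
        (Dm m (∏ i ∈ Finset.univ.filter (fun i : Fin n => (i : ℕ) < r), X i)),
      ∀ α : degIdx n m, (B α : degIdx n m → S n) = xRadOp r m α) ∧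
    Module.Free (S n)
      (Dm m (∏ i ∈ Finset.univ.filter (fun i : Fin n => (i : ℕ) < r), X i)) := by
  obtain ⟨B, hB⟩ := Submodule.exists_basis_single_of_forall_dvd
    (fun _ => xRad_ne_zero _ _) xRadOp_mem_Dm
    (fun c hc => xRad_dvd_coeff_of_mem_Dm hc)
  exact ⟨xRadOp_mem_Dm, ⟨B, hB⟩, .of_basis B⟩

/-- For `1 ≤ r ≤ n` and `m ≥ 1`, the family
`{x_α ∂^α : |α| = m}` is a basis of the `S`-module `D^(m)(x₁⋯x_r)`; in particular
this module is free. -/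
theorem Dm_coordinate_free {n r m : ℕ} (hr1 : 1 ≤ r) (hrn : r ≤ n) (hm : 1 ≤ m) :
    (∀ α : degIdx n m,
        xRadOp r m α ∈ Dm m (∏ i ∈ Finset.univ.filter (fun i : Fin n => (i : ℕ) < r), X i)) ∧
    (∃ B : Module.Basis (degIdx n m) (S n)
        (Dm m (∏ i ∈ Finset.univ.filter (fun i : Fin n => (i : ℕ) < r), X i)),
      ∀ α : degIdx n m, (B α : degIdx n m → S n) = xRadOp r m α) ∧
    Module.Free (S n)
      (Dm m (∏ i ∈ Finset.univ.filter (fun i : Fin n => (i : ℕ) < r), X i)) :=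
  Dm_coordinate_free_general

end
end
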